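/- arXiv:1704.06143 — 2 statements merged into one kernel-verified Lean document; each statement's English description precedes it below -/
import Mathlib

section
/- Let V be a decoupling set for the d-dimensional Hilbert space H_s and let H_e be a separable Hilbert space. If U is a unitary operator on H_s ⊗ H_e that commutes with v ⊗ 1_{H_e} for every v ∈ V, then there exists a unitary W on H_e such that U = 1_{H_s} ⊗ W; indeed U = 1_{H_s} ⊗ (1/d) tr_{H_s}(U), where tr_{H_s} denotes the partial trace over H_s. -/
set_option synthInstance.maxHeartbeats 1000000
set_option maxHeartbeats 1000000

noncomputable section

open Finset

/-- `PiLp 2` over a finite index of complete spaces is complete. -/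
instance (priority := high) {ι : Type*} [Fintype ι] (α : ι → Type*)
    [∀ i, NormedAddCommGroup (α i)] [∀ i, CompleteSpace (α i)] :
    CompleteSpace (PiLp 2 α) :=
  inferInstance

variable {E : Type*} [NormedAddCommGroup E] [InnerProductSpace ℂ E] [CompleteSpace E]

/-- The operator `v ⊗ 1` on `ℂ^d ⊗ H_e ≅ (H_e)^d` for a `d × d` matrix `v`. -/
def matCLM {d : ℕ} (v : Matrix (Fin d) (Fin d) ℂ) :
    (PiLp 2 fun _ : Fin d => E) →L[ℂ] (PiLp 2 fun _ : Fin d => E) :=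
  ((PiLp.continuousLinearEquiv 2 ℂ _).symm.toContinuousLinearMap.comp
    ((ContinuousLinearMap.pi fun i => ∑ j, v i j • ContinuousLinearMap.proj j).comp
      (PiLp.continuousLinearEquiv 2 ℂ _).toContinuousLinearMap))

/-- The operator `1 ⊗ W` on `ℂ^d ⊗ H_e ≅ (H_e)^d`. -/
def idTensor {d : ℕ} (W : E →L[ℂ] E) :
    (PiLp 2 fun _ : Fin d => E) →L[ℂ] (PiLp 2 fun _ : Fin d => E) :=
  ((PiLp.continuousLinearEquiv 2 ℂ _).symm.toContinuousLinearMap.comp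
    ((ContinuousLinearMap.pi fun i => W.comp (ContinuousLinearMap.proj i)).comp
      (PiLp.continuousLinearEquiv 2 ℂ _).toContinuousLinearMap))

/-- Projection onto the `i`-th block of `ℂ^d ⊗ H_e ≅ (H_e)^d`. -/
def projCLM {d : ℕ} (i : Fin d) : (PiLp 2 fun _ : Fin d => E) →L[ℂ] E :=
  (ContinuousLinearMap.proj i).comp (PiLp.continuousLinearEquiv 2 ℂ _).toContinuousLinearMap

/-- Inclusion of the `i`-th block into `ℂ^d ⊗ H_e ≅ (H_e)^d`. -/
def inclCLM {d : ℕ} (i : Fin d) : E →L[ℂ] (PiLp 2 fun _ : Fin d => E) :=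
  (PiLp.continuousLinearEquiv 2 ℂ _).symm.toContinuousLinearMap.comp
    (ContinuousLinearMap.pi fun j => if j = i then ContinuousLinearMap.id ℂ E else 0)

/-- The (normalized by `(tr 1)⁻¹ = 1/d` below) partial trace over `ℂ^d` of an operator on
`ℂ^d ⊗ H_e`: the sum of its diagonal blocks. -/
def partialTrace {d : ℕ}
    (U : (PiLp 2 fun _ : Fin d => E) →L[ℂ] (PiLp 2 fun _ : Fin d => E)) : E →L[ℂ] E :=
  ∑ i : Fin d, (projCLM i).comp (U.comp (inclCLM i))

/-! A matrix commuting with every element of a decoupling set is fixed by the average of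
`x ↦ v x v*` over the set, and that average is `(tr x / d) • 1`; so the commutant of `V` consists
of scalars. Applied to the scalar matrices `(⟪ξ, U_{kl} η⟫)_{k,l}` built from the blocks `U_{kl}`
of `U`, this kills the off-diagonal blocks and makes every diagonal block equal to
`(1/d) tr_{ℂ^d} U`. Finally `W ↦ 1 ⊗ W` is an injective `*`-homomorphism for `d > 0`, so `W` is
unitary because `U = 1 ⊗ W` is. -/

theorem inv_card_smul_sum_mul_mul_star_eq_self {𝕜 A G : Type*} [DivisionSemiring 𝕜]
    [CharZero 𝕜] [Semiring A] [StarMul A] [Module 𝕜 A] [Fintype G] [Nonempty G]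
    (u : G → unitary A) {x : A} (hx : ∀ g, Commute (u g : A) x) :
    (Fintype.card G : 𝕜)⁻¹ • ∑ g, (u g : A) * x * star (u g : A) = x := by
  have hfix : ∀ g, (u g : A) * x * star (u g : A) = x := fun g => by
    rw [(hx g).eq, mul_assoc, Unitary.mul_star_self_of_mem (u g).2, mul_one]
  rw [sum_congr rfl fun g _ => hfix g, sum_const, card_univ, ← Nat.cast_smul_eq_nsmul 𝕜,
    smul_smul, inv_mul_cancel₀ (Nat.cast_ne_zero.2 Fintype.card_ne_zero), one_smul]

open scoped InnerProductSpace

section Blocks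

variable {H : Type*} [NormedAddCommGroup H] [InnerProductSpace ℂ H] {d : ℕ}

theorem inclCLM_apply (i k : Fin d) (η : H) :
    inclCLM i η k = if k = i then η else 0 := by
  show (if k = i then ContinuousLinearMap.id ℂ H else 0) η = _
  split <;> rfl

theorem matCLM_apply (v : Matrix (Fin d) (Fin d) ℂ) (x : PiLp 2 fun _ : Fin d => H)
    (i : Fin d) : matCLM v x i = ∑ j, v i j • x j := by
  show (∑ j, v i j • ContinuousLinearMap.proj (R := ℂ) (φ := fun _ : Fin d => H) j) x = _
  simp

theorem idTensor_apply (W : H →L[ℂ] H) (x : PiLp 2 fun _ : Fin d => H) (i : Fin d) :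
    idTensor W x i = W (x i) := rfl

theorem partialTrace_apply (U : (PiLp 2 fun _ : Fin d => H) →L[ℂ] (PiLp 2 fun _ : Fin d => H))
    (η : H) : partialTrace U η = ∑ i, U (inclCLM i η) i := by
  simp [partialTrace, projCLM]

theorem sum_inclCLM_apply (x : PiLp 2 fun _ : Fin d => H) : ∑ j, inclCLM j (x j) = x := by
  ext k
  simp [WithLp.ofLp_sum, inclCLM_apply]

theorem matCLM_inclCLM (v : Matrix (Fin d) (Fin d) ℂ) (j : Fin d) (η : H) :
    matCLM v (inclCLM j η) = ∑ l, v l j • inclCLM l η := by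
  ext k
  simp [matCLM_apply, WithLp.ofLp_sum, inclCLM_apply]

theorem ext_inclCLM {A B : (PiLp 2 fun _ : Fin d => H) →L[ℂ] (PiLp 2 fun _ : Fin d => H)}
    (h : ∀ j η, A (inclCLM j η) = B (inclCLM j η)) : A = B := by
  refine ContinuousLinearMap.ext fun x => ?_
  rw [← sum_inclCLM_apply x, map_sum, map_sum]
  exact sum_congr rfl fun j _ => h j (x j)

def blockInnerMatrix (U : (PiLp 2 fun _ : Fin d => H) →L[ℂ] (PiLp 2 fun _ : Fin d => H))
    (ξ η : H) : Matrix (Fin d) (Fin d) ℂ :=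
  Matrix.of fun k l => ⟪ξ, U (inclCLM l η) k⟫_ℂ

theorem trace_blockInnerMatrix
    (U : (PiLp 2 fun _ : Fin d => H) →L[ℂ] (PiLp 2 fun _ : Fin d => H)) (ξ η : H) :
    (blockInnerMatrix U ξ η).trace = ⟪ξ, partialTrace U η⟫_ℂ := by
  simp [blockInnerMatrix, Matrix.trace, partialTrace_apply]

theorem commute_blockInnerMatrix
    {U : (PiLp 2 fun _ : Fin d => H) →L[ℂ] (PiLp 2 fun _ : Fin d => H)}
    {v : Matrix (Fin d) (Fin d) ℂ} (hv : (matCLM v).comp U = U.comp (matCLM v)) (ξ η : H) :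
    Commute v (blockInnerMatrix U ξ η) := by
  ext i j
  have hvU : matCLM v (U (inclCLM j η)) = U (matCLM v (inclCLM j η)) :=
    DFunLike.congr_fun hv (inclCLM j η)
  calc (v * blockInnerMatrix U ξ η) i j
      = ⟪ξ, matCLM v (U (inclCLM j η)) i⟫_ℂ := by
        simp [Matrix.mul_apply, blockInnerMatrix, matCLM_apply]
    _ = ⟪ξ, U (matCLM v (inclCLM j η)) i⟫_ℂ := by rw [hvU]
    _ = (blockInnerMatrix U ξ η * v) i j := by
        simp [Matrix.mul_apply, blockInnerMatrix, matCLM_inclCLM, WithLp.ofLp_sum, mul_comm]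

theorem eq_idTensor_of_blockInnerMatrix_eq
    {U : (PiLp 2 fun _ : Fin d => H) →L[ℂ] (PiLp 2 fun _ : Fin d => H)} {W : H →L[ℂ] H}
    (h : ∀ ξ η, blockInnerMatrix U ξ η = ⟪ξ, W η⟫_ℂ • 1) : U = idTensor W := by
  refine ext_inclCLM fun j η => PiLp.ext fun i => ext_inner_left ℂ fun ξ => ?_
  have hij := congrFun (congrFun (h ξ η) i) j
  simp only [blockInnerMatrix, Matrix.of_apply, Matrix.smul_apply, Matrix.one_apply] at hij
  rw [hij, idTensor_apply, inclCLM_apply]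
  split_ifs <;> simp

theorem idTensor_mul (A B : H →L[ℂ] H) :
    idTensor (d := d) A * idTensor B = idTensor (A * B) :=
  rfl

theorem idTensor_one : idTensor (d := d) (1 : H →L[ℂ] H) = 1 :=
  rfl

theorem star_idTensor [CompleteSpace H] (A : H →L[ℂ] H) :
    star (idTensor (d := d) A) = idTensor (star A) := by
  refine ((ContinuousLinearMap.eq_adjoint_iff _ _).2 fun x y => ?_).symm
  simp only [PiLp.inner_apply, idTensor_apply, ContinuousLinearMap.star_eq_adjoint,
    ContinuousLinearMap.adjoint_inner_left]

theorem idTensor_injective (hd : 0 < d) : Function.Injective (idTensor (d := d) (E := H)) := by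
  intro A B h
  ext ξ
  simpa [idTensor_apply, inclCLM_apply] using
    congrArg (fun T => T (inclCLM ⟨0, hd⟩ ξ) ⟨0, hd⟩) h

theorem idTensor_mem_unitary_iff [CompleteSpace H] (hd : 0 < d) {W : H →L[ℂ] H} :
    idTensor (d := d) W ∈ unitary _ ↔ W ∈ unitary (H →L[ℂ] H) := by
  simp only [Unitary.mem_iff, star_idTensor, idTensor_mul, ← idTensor_one,
    (idTensor_injective hd).eq_iff]

end Blocks

theorem commutant_of_decoupling_set_is_one_tensor_general
    (d : ℕ) (hd : 0 < d)
    (V : Subgroup (Matrix.unitaryGroup (Fin d) ℂ)) [Fintype V]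
    (hVdec : ∀ x : Matrix (Fin d) (Fin d) ℂ,
      ((Fintype.card V : ℂ))⁻¹ •
          ∑ v : V, ((v : Matrix.unitaryGroup (Fin d) ℂ) : Matrix (Fin d) (Fin d) ℂ) * x *
            star ((v : Matrix.unitaryGroup (Fin d) ℂ) : Matrix (Fin d) (Fin d) ℂ)
        = (x.trace / d) • (1 : Matrix (Fin d) (Fin d) ℂ))
    (U : (PiLp 2 fun _ : Fin d => E) →L[ℂ] (PiLp 2 fun _ : Fin d => E))
    (hU : U ∈ unitary ((PiLp 2 fun _ : Fin d => E) →L[ℂ] (PiLp 2 fun _ : Fin d => E)))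
    (hcomm : ∀ v : V,
      (matCLM ((v : Matrix.unitaryGroup (Fin d) ℂ) : Matrix (Fin d) (Fin d) ℂ)).comp U
        = U.comp (matCLM ((v : Matrix.unitaryGroup (Fin d) ℂ) : Matrix (Fin d) (Fin d) ℂ))) :
    ∃ W : E →L[ℂ] E, W ∈ unitary (E →L[ℂ] E) ∧ U = idTensor W ∧
      W = (d : ℂ)⁻¹ • partialTrace U := by
  have hscalar : ∀ x : Matrix (Fin d) (Fin d) ℂ,
      (∀ v : V, Commute ((v : Matrix.unitaryGroup (Fin d) ℂ) : Matrix (Fin d) (Fin d) ℂ) x) →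
        x = (x.trace / d) • 1 := fun x hx =>
    (inv_card_smul_sum_mul_mul_star_eq_self (fun v : V => (v : Matrix.unitaryGroup (Fin d) ℂ))
      hx).symm.trans (hVdec x)
  set W : E →L[ℂ] E := (d : ℂ)⁻¹ • partialTrace U
  have hUW : U = idTensor W := eq_idTensor_of_blockInnerMatrix_eq fun ξ η => by
    rw [hscalar _ fun v => commute_blockInnerMatrix (hcomm v) ξ η, trace_blockInnerMatrix,
      smul_apply, inner_smul_right, div_eq_inv_mul]
  exact ⟨W, (idTensor_mem_unitary_iff hd).1 (hUW ▸ hU), hUW, rfl⟩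

/-- Let `V` be a decoupling set for `ℂ^d` and `H_e` a separable Hilbert space.
If a unitary `U` on `ℂ^d ⊗ H_e` commutes with `v ⊗ 1` for every `v ∈ V`, then `U = 1 ⊗ W` for a
unitary `W` on `H_e`; indeed `U = 1 ⊗ (1/d) tr_{ℂ^d}(U)`. -/
theorem commutant_of_decoupling_set_is_one_tensor
    [SecondCountableTopology E]
    (d : ℕ) (hd : 0 < d)
    (V : Subgroup (Matrix.unitaryGroup (Fin d) ℂ)) [Fintype V]
    (hVdec : ∀ x : Matrix (Fin d) (Fin d) ℂ,
      ((Fintype.card V : ℂ))⁻¹ •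
          ∑ v : V, ((v : Matrix.unitaryGroup (Fin d) ℂ) : Matrix (Fin d) (Fin d) ℂ) * x *
            star ((v : Matrix.unitaryGroup (Fin d) ℂ) : Matrix (Fin d) (Fin d) ℂ)
        = (x.trace / d) • (1 : Matrix (Fin d) (Fin d) ℂ))
    (U : (PiLp 2 fun _ : Fin d => E) →L[ℂ] (PiLp 2 fun _ : Fin d => E))
    (hU : U ∈ unitary ((PiLp 2 fun _ : Fin d => E) →L[ℂ] (PiLp 2 fun _ : Fin d => E)))
    (hcomm : ∀ v : V,
      (matCLM ((v : Matrix.unitaryGroup (Fin d) ℂ) : Matrix (Fin d) (Fin d) ℂ)).comp U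
        = U.comp (matCLM ((v : Matrix.unitaryGroup (Fin d) ℂ) : Matrix (Fin d) (Fin d) ℂ))) :
    ∃ W : E →L[ℂ] E, W ∈ unitary (E →L[ℂ] E) ∧ U = idTensor W ∧
      W = (d : ℂ)⁻¹ • partialTrace U :=
  commutant_of_decoupling_set_is_one_tensor_general d hd V hVdec U hU hcomm
end
end

section
/- Let G and F be bounded self-adjoint operators on a Hilbert space with 0 ≤ G ≤ F ≤ 1 (in the operator order). Then for every n ≥ 1: (i) G ≤ (1 + (1−G))^{−1}; (ii) G^{2n} ≤ (1 + 2n(1−G))^{−1}; and (iii) (1 + 2n(1−G))^{−1} ≤ (1 + 2n(1−F))^{−1}. In particular G^{2n} ≤ (1 + 2n(1−F))^{−1}, so for every vector ξ, ‖G^n ξ‖² ≤ ⟨ξ, (1 + 2n(1−F))^{−1} ξ⟩. -/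
noncomputable section

open ContinuousLinearMap

variable {H : Type*} [NormedAddCommGroup H] [InnerProductSpace ℂ H] [CompleteSpace H]

/-- The Loewner order on bounded operators: `A ≤ B` iff `B - A` is a positive operator. -/
def OpLE (A B : H →L[ℂ] H) : Prop := (B - A).IsPositive

/-! For `0 ≤ G ≤ 1`, parts (i) and (ii) are the scalar inequality `t ^ m * (1 + m * (1 - t)) ≤ 1`
on the spectrum of `G` (with `m = 1` and `m = 2n`), transported by the continuous functional
calculus once the given inverse is identified with `cfc (fun t ↦ (1 + m * (1 - t))⁻¹) G`.
Part (iii) is the operator antitonicity of inversion applied to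
`0 ≤ 1 + 2n(1 - F) ≤ 1 + 2n(1 - G)`, and the vector bound is `G ^ (2n) ≤ F₂` evaluated at `ξ`,
because `G ^ (2n) = (G ^ n)† G ^ n`. -/

theorem pow_mul_one_add_mul_one_sub_le_one (m : ℕ) {t : ℝ} (ht : 0 ≤ t) :
    t ^ m * (1 + m * (1 - t)) ≤ 1 := by
  induction m with
  | zero => simp
  | succ m ih =>
    have step : t * (1 + (m + 1) * (1 - t)) ≤ 1 + m * (1 - t) := by
      rw [← sub_nonneg,
        show 1 + m * (1 - t) - t * (1 + (m + 1) * (1 - t)) = (m + 1) * (1 - t) ^ 2 by ring]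
      positivity
    calc t ^ (m + 1) * (1 + ↑(m + 1) * (1 - t))
        = t ^ m * (t * (1 + (m + 1) * (1 - t))) := by push_cast; ring
      _ ≤ t ^ m * (1 + m * (1 - t)) := by gcongr
      _ ≤ 1 := ih

section CStarAlgebra

variable {A : Type*} [CStarAlgebra A]

theorem cfc_one_add_mul_one_sub {a : A} (ha : IsSelfAdjoint a) (c : ℝ) :
    cfc (fun t : ℝ => 1 + c * (1 - t)) a = 1 + c • (1 - a) := by
  rw [cfc_add .., cfc_const_one ℝ a, cfc_const_mul .., cfc_sub .., cfc_const_one ℝ a,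
    cfc_id' ℝ a]

variable [PartialOrder A] [StarOrderedRing A]

theorem one_add_mul_one_sub_pos_of_mem_spectrum {a : A} (ha : IsSelfAdjoint a) (ha1 : a ≤ 1)
    {c : ℝ} (hc : 0 ≤ c) {t : ℝ} (ht : t ∈ spectrum ℝ a) : 0 < 1 + c * (1 - t) := by
  have := (CFC.le_one_iff a ha).mp ha1 t ht
  positivity

theorem eq_cfc_inv_of_mul_one_add_smul_one_sub_eq_one {a b : A} {c : ℝ} (ha : IsSelfAdjoint a)
    (ha1 : a ≤ 1) (hc : 0 ≤ c) (hb : b * (1 + c • (1 - a)) = 1) :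
    b = cfc (fun t : ℝ => (1 + c * (1 - t))⁻¹) a := by
  rw [← cfc_one_add_mul_one_sub ha] at hb
  exact (Units.inv_eq_of_mul_eq_one_left (u := cfcUnits _ a fun t ht =>
    (one_add_mul_one_sub_pos_of_mem_spectrum ha ha1 hc ht).ne') hb).symm

theorem pow_le_of_mul_one_add_smul_one_sub_eq_one {a b : A} (m : ℕ) (ha0 : 0 ≤ a) (ha1 : a ≤ 1)
    (hb : b * (1 + (m : ℝ) • (1 - a)) = 1) : a ^ m ≤ b := by
  have ha : IsSelfAdjoint a := .of_nonneg ha0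
  have hpos {t : ℝ} (ht : t ∈ spectrum ℝ a) : 0 < 1 + m * (1 - t) :=
    one_add_mul_one_sub_pos_of_mem_spectrum ha ha1 m.cast_nonneg ht
  rw [eq_cfc_inv_of_mul_one_add_smul_one_sub_eq_one ha ha1 m.cast_nonneg hb,
    ← cfc_pow_id (R := ℝ) a m]
  refine cfc_mono (fun t ht => ?_) (hg := .inv₀ (by fun_prop) fun t ht => (hpos ht).ne')
  rw [← one_div, le_div_iff₀ (hpos ht)]
  exact pow_mul_one_add_mul_one_sub_le_one m (spectrum_nonneg_of_nonneg ha0 ht)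

theorem inv_le_inv_of_mul_eq_one {x y b b' : A} (hx : 0 ≤ x) (hxy : x ≤ y)
    (hb : b * y = 1 ∧ y * b = 1) (hb' : b' * x = 1 ∧ x * b' = 1) : b ≤ b' :=
  CStarAlgebra.inv_le_inv (a := ⟨x, b', hb'.2, hb'.1⟩) (b := ⟨y, b, hb.2, hb.1⟩) hx hxy

theorem inv_one_add_smul_one_sub_mono {a a' b b' : A} {c : ℝ} (hc : 0 ≤ c) (haa' : a ≤ a')
    (ha'1 : a' ≤ 1) (hb : b * (1 + c • (1 - a)) = 1 ∧ (1 + c • (1 - a)) * b = 1)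
    (hb' : b' * (1 + c • (1 - a')) = 1 ∧ (1 + c • (1 - a')) * b' = 1) : b ≤ b' := by
  refine inv_le_inv_of_mul_eq_one ?_ (by gcongr) hb hb'
  exact add_nonneg zero_le_one (smul_nonneg hc (sub_nonneg.mpr ha'1))

end CStarAlgebra

theorem norm_apply_sq_le_re_inner_of_adjoint_mul_self_le {𝕜 E : Type*} [RCLike 𝕜]
    [NormedAddCommGroup E] [InnerProductSpace 𝕜 E] [CompleteSpace E] {T S : E →L[𝕜] E}
    (h : adjoint T * T ≤ S) (x : E) : ‖T x‖ ^ 2 ≤ RCLike.re (inner 𝕜 x (S x)) := by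
  have := h.re_inner_nonneg_right x
  rw [sub_apply, inner_sub_right, map_sub, sub_nonneg] at this
  rwa [apply_norm_sq_eq_inner_adjoint_right]

theorem kato_operator_inequalities_general
    (G F : H →L[ℂ] H)
    (hG0 : G.IsPositive) (hGF : OpLE G F) (hF1 : OpLE F 1)
    (n : ℕ)
    (J G₂ F₂ : H →L[ℂ] H)
    (hJ : J * (1 + (1 - G)) = 1 ∧ (1 + (1 - G)) * J = 1)
    (hG₂ : G₂ * (1 + (2 * n : ℝ) • (1 - G)) = 1 ∧ (1 + (2 * n : ℝ) • (1 - G)) * G₂ = 1)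
    (hF₂ : F₂ * (1 + (2 * n : ℝ) • (1 - F)) = 1 ∧ (1 + (2 * n : ℝ) • (1 - F)) * F₂ = 1) :
    OpLE G J ∧ OpLE (G ^ (2 * n)) G₂ ∧ OpLE G₂ F₂ ∧ OpLE (G ^ (2 * n)) F₂ ∧
      ∀ ξ : H, ‖(G ^ n) ξ‖ ^ 2 ≤ (inner ℂ ξ (F₂ ξ) : ℂ).re := by
  have hG : 0 ≤ G := (nonneg_iff_isPositive G).mpr hG0
  have hG1 : G ≤ 1 := le_trans (b := F) hGF hF1
  have hi : G ≤ J := by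
    simpa using pow_le_of_mul_one_add_smul_one_sub_eq_one 1 hG hG1 (by simpa using hJ.1)
  have hii : G ^ (2 * n) ≤ G₂ :=
    pow_le_of_mul_one_add_smul_one_sub_eq_one (2 * n) hG hG1 (by exact_mod_cast hG₂.1)
  have hiii : G₂ ≤ F₂ := inv_one_add_smul_one_sub_mono (by positivity) hGF hF1 hG₂ hF₂
  have hiv : G ^ (2 * n) ≤ F₂ := hii.trans hiii
  refine ⟨hi, hii, hiii, hiv, fun ξ => norm_apply_sq_le_re_inner_of_adjoint_mul_self_le ?_ ξ⟩
  rwa [← star_eq_adjoint, (hG0.isSelfAdjoint.pow n).star_eq, ← pow_add, ← two_mul]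

/-- Let `G`, `F` be bounded self-adjoint operators with `0 ≤ G ≤ F ≤ 1`.
Then for every `n ≥ 1`, writing `J` for the inverse of `1 + (1−G)`, `G₂` for the inverse of
`1 + 2n(1−G)` and `F₂` for the inverse of `1 + 2n(1−F)`, one has
(i) `G ≤ J`, (ii) `G^(2n) ≤ G₂`, (iii) `G₂ ≤ F₂`; in particular `G^(2n) ≤ F₂` and for every
vector `ξ`, `‖G^n ξ‖² ≤ ⟨ξ, F₂ ξ⟩`. -/
theorem kato_operator_inequalities
    (G F : H →L[ℂ] H) (hGsa : IsSelfAdjoint G) (hFsa : IsSelfAdjoint F)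
    (hG0 : G.IsPositive) (hGF : OpLE G F) (hF1 : OpLE F 1)
    (n : ℕ) (hn : 1 ≤ n)
    (J G₂ F₂ : H →L[ℂ] H)
    (hJ : J * (1 + (1 - G)) = 1 ∧ (1 + (1 - G)) * J = 1)
    (hG₂ : G₂ * (1 + (2 * n : ℝ) • (1 - G)) = 1 ∧ (1 + (2 * n : ℝ) • (1 - G)) * G₂ = 1)
    (hF₂ : F₂ * (1 + (2 * n : ℝ) • (1 - F)) = 1 ∧ (1 + (2 * n : ℝ) • (1 - F)) * F₂ = 1) :
    OpLE G J ∧ OpLE (G ^ (2 * n)) G₂ ∧ OpLE G₂ F₂ ∧ OpLE (G ^ (2 * n)) F₂ ∧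
      ∀ ξ : H, ‖(G ^ n) ξ‖ ^ 2 ≤ (inner ℂ ξ (F₂ ξ) : ℂ).re :=
  kato_operator_inequalities_general G F hG0 hGF hF1 n J G₂ F₂ hJ hG₂ hF₂
end
end
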